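/- The map (w, A) ↦ R(w, A) = E[‖X − μ‖_w² − min_{a∈A} ‖X − a‖_w²] is continuous on the space of pairs (w, A) where w ranges over nonnegative weight vectors in ℝ^p and A over finite sets of K points in ℝ^p, with metric d((w₁,A₁),(w₂,A₂)) = max{‖w₁ − w₂‖, d_H(A₁,A₂)}, where d_H is the Hausdorff metric; here X is a random vector in ℝ^p with E‖X‖² < ∞ and mean μ. -/

import Mathlib

/-!
In Mathlib `NonemptyCompacts` carries the Vietoris topology, which is the topology of the
Hausdorff metric. For a nonempty compact `K` of a linear order, `a < sInf K` iff `K ⊆ Ioi a`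
and `sInf K < b` iff `K` meets `Iio b`; both are open conditions on `K`, so `K ↦ sInf K` is
continuous and the integrand `‖x - μ‖²_w - min_{a ∈ A} ‖x - a‖²_w` is jointly continuous in
`((w, A), x)`. Near a fixed `(w₀, A₀)` the weights are bounded and `A` stays inside a fixed
compact set, so the integrand is dominated by `C ∑ⱼ xⱼ² + D`, which is integrable; dominated
convergence gives continuity of the risk.
-/

open MeasureTheory Filter Topology TopologicalSpace

namespace TopologicalSpace.NonemptyCompacts

theorem lt_csInf_iff {α : Type*} [ConditionallyCompleteLinearOrder α]
    [TopologicalSpace α] [ClosedIicTopology α] (K : NonemptyCompacts α) {a : α} :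
    a < sInf (K : Set α) ↔ (K : Set α) ⊆ Set.Ioi a :=
  ⟨fun h _ hb => h.trans_le (csInf_le K.isCompact.bddBelow hb),
    fun h => h (K.isCompact.sInf_mem K.nonempty)⟩

theorem continuous_sInf {α : Type*} [ConditionallyCompleteLinearOrder α]
    [TopologicalSpace α] [OrderTopology α] :
    Continuous fun K : NonemptyCompacts α => sInf (K : Set α) := by
  refine continuous_iff_continuousAt.2 fun K => tendsto_order.2 ⟨fun a ha => ?_, fun b hb => ?_⟩
  · filter_upwards [(isOpen_subsets_of_isOpen isOpen_Ioi).mem_nhds (K.lt_csInf_iff.1 ha)]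
      with L hL using L.lt_csInf_iff.2 hL
  · filter_upwards [(isOpen_inter_nonempty_of_isOpen isOpen_Iio).mem_nhds
      ((csInf_lt_iff K.isCompact.bddBelow K.nonempty).1 hb)]
      with L hL using (csInf_lt_iff L.isCompact.bddBelow L.nonempty).2 hL

theorem exists_isCompact_eventually_subset {E : Type*} [TopologicalSpace E]
    [WeaklyLocallyCompactSpace E] (K₀ : NonemptyCompacts E) :
    ∃ L : Set E, IsCompact L ∧ ∀ᶠ K : NonemptyCompacts E in 𝓝 K₀, (K : Set E) ⊆ L := by
  obtain ⟨L, hL, hK₀L⟩ := exists_compact_superset K₀.isCompact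
  refine ⟨L, hL, ?_⟩
  filter_upwards [(isOpen_subsets_of_isOpen isOpen_interior).mem_nhds hK₀L]
    with K hK using hK.trans interior_subset

end TopologicalSpace.NonemptyCompacts

theorem Continuous.sInf_image_nonemptyCompacts {X Y α : Type*} [TopologicalSpace X]
    [TopologicalSpace Y] [ConditionallyCompleteLinearOrder α] [TopologicalSpace α]
    [OrderTopology α] {f : X → Y → α} {K : X → NonemptyCompacts Y}
    (hf : Continuous f.uncurry) (hK : Continuous K) :
    Continuous fun x => sInf (f x '' K x) :=
  NonemptyCompacts.continuous_sInf.comp (hK.nonemptyCompacts_map' hf)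

section WeightedSqDist

variable {ι : Type*} [Fintype ι]

def weightedSqDist (w x c : ι → ℝ) : ℝ := ∑ j, w j * (x j - c j) ^ 2

@[fun_prop]
theorem Continuous.weightedSqDist {α : Type*} [TopologicalSpace α] {w x c : α → ι → ℝ}
    (hw : Continuous w) (hx : Continuous x) (hc : Continuous c) :
    Continuous fun a => weightedSqDist (w a) (x a) (c a) := by
  unfold _root_.weightedSqDist
  fun_prop

theorem abs_weightedSqDist_le (w x c : ι → ℝ) :
    |weightedSqDist w x c| ≤ 2 * ‖w‖ * (∑ j, x j ^ 2 + Fintype.card ι * ‖c‖ ^ 2) := by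
  have hterm (j : ι) : |w j * (x j - c j) ^ 2| ≤ 2 * ‖w‖ * x j ^ 2 + 2 * ‖w‖ * ‖c‖ ^ 2 := by
    have hw : |w j| ≤ ‖w‖ := norm_le_pi_norm w j
    have hc : c j ^ 2 ≤ ‖c‖ ^ 2 := by
      rw [← sq_abs]
      exact pow_le_pow_left₀ (abs_nonneg _) (norm_le_pi_norm c j) 2
    rw [abs_mul, abs_sq]
    nlinarith [abs_nonneg (w j), sq_nonneg (x j - c j), sq_nonneg (x j + c j)]
  calc |weightedSqDist w x c| ≤ ∑ j, |w j * (x j - c j) ^ 2| := Finset.abs_sum_le_sum_abs _ _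
    _ ≤ ∑ j, (2 * ‖w‖ * x j ^ 2 + 2 * ‖w‖ * ‖c‖ ^ 2) := Finset.sum_le_sum fun j _ => hterm j
    _ = 2 * ‖w‖ * (∑ j, x j ^ 2 + Fintype.card ι * ‖c‖ ^ 2) := by
      rw [Finset.sum_add_distrib, ← Finset.mul_sum, Finset.sum_const, Finset.card_univ,
        nsmul_eq_mul]
      ring

theorem Real.abs_sInf_le {s : Set ℝ} (hs : s.Nonempty) {B : ℝ} (hB : ∀ b ∈ s, |b| ≤ B) :
    |sInf s| ≤ B := by
  have hbdd : BddBelow s := ⟨-B, fun b hb => neg_le_of_abs_le (hB b hb)⟩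
  obtain ⟨b, hb⟩ := hs
  exact abs_le.2 ⟨le_csInf ⟨b, hb⟩ fun b hb => neg_le_of_abs_le (hB b hb),
    (csInf_le hbdd hb).trans (le_of_abs_le (hB b hb))⟩

noncomputable def riskIntegrand (μ : ι → ℝ) (θ : (ι → ℝ) × NonemptyCompacts (ι → ℝ))
    (x : ι → ℝ) : ℝ :=
  weightedSqDist θ.1 x μ - sInf (weightedSqDist θ.1 x '' θ.2)

theorem continuous_riskIntegrand (μ : ι → ℝ) :
    Continuous (Function.uncurry (riskIntegrand μ)) := by
  have hmin : Continuous fun q : ((ι → ℝ) × NonemptyCompacts (ι → ℝ)) × (ι → ℝ) =>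
      sInf (weightedSqDist q.1.1 q.2 '' q.1.2) :=
    Continuous.sInf_image_nonemptyCompacts (by fun_prop) (by fun_prop)
  exact (Continuous.weightedSqDist (by fun_prop) (by fun_prop) continuous_const).sub hmin

theorem abs_riskIntegrand_le (μ : ι → ℝ) {θ : (ι → ℝ) × NonemptyCompacts (ι → ℝ)} {W R : ℝ}
    (hw : ‖θ.1‖ ≤ W) (hA : ∀ a ∈ (θ.2 : Set (ι → ℝ)), ‖a‖ ≤ R) (x : ι → ℝ) :
    |riskIntegrand μ θ x| ≤
      4 * W * ∑ j, x j ^ 2 + 2 * W * Fintype.card ι * (‖μ‖ ^ 2 + R ^ 2) := by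
  have hW : 0 ≤ 2 * W := by linarith [norm_nonneg θ.1]
  have hbound (c : ι → ℝ) (hc : ‖c‖ ≤ R) :
      |weightedSqDist θ.1 x c| ≤ 2 * W * (∑ j, x j ^ 2 + Fintype.card ι * R ^ 2) :=
    (abs_weightedSqDist_le _ _ _).trans (by gcongr)
  calc |riskIntegrand μ θ x|
      ≤ |weightedSqDist θ.1 x μ| + |sInf (weightedSqDist θ.1 x '' θ.2)| := abs_sub _ _
    _ ≤ 2 * W * (∑ j, x j ^ 2 + Fintype.card ι * ‖μ‖ ^ 2)
          + 2 * W * (∑ j, x j ^ 2 + Fintype.card ι * R ^ 2) := by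
      refine add_le_add ((abs_weightedSqDist_le _ _ _).trans (by gcongr)) ?_
      refine Real.abs_sInf_le (θ.2.nonempty.image _) ?_
      rintro _ ⟨a, ha, rfl⟩
      exact hbound a (hA a ha)
    _ = 4 * W * ∑ j, x j ^ 2 + 2 * W * Fintype.card ι * (‖μ‖ ^ 2 + R ^ 2) := by ring

theorem exists_eventually_abs_riskIntegrand_le (μ : ι → ℝ)
    (θ₀ : (ι → ℝ) × NonemptyCompacts (ι → ℝ)) :
    ∃ C D : ℝ, ∀ᶠ θ in 𝓝 θ₀, ∀ x, |riskIntegrand μ θ x| ≤ C * ∑ j, x j ^ 2 + D := by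
  obtain ⟨L, hL, hsub⟩ := θ₀.2.exists_isCompact_eventually_subset
  obtain ⟨R, hR⟩ := hL.isBounded.exists_norm_le
  have hw : ∀ᶠ θ : (ι → ℝ) × NonemptyCompacts (ι → ℝ) in 𝓝 θ₀, ‖θ.1‖ ≤ ‖θ₀.1‖ + 1 :=
    (continuous_fst.norm.tendsto θ₀).eventually (eventually_le_nhds (lt_add_one _))
  refine ⟨4 * (‖θ₀.1‖ + 1), 2 * (‖θ₀.1‖ + 1) * Fintype.card ι * (‖μ‖ ^ 2 + R ^ 2), ?_⟩
  filter_upwards [hw, continuous_snd.continuousAt.eventually hsub] with θ hθw hθA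
  exact abs_riskIntegrand_le μ hθw fun a ha => hR a (hθA ha)

end WeightedSqDist

theorem risk_continuous_general {p K : ℕ} {Ω : Type*} [MeasureSpace Ω]
    [IsProbabilityMeasure (volume : Measure Ω)]
    (X : Ω → Fin p → ℝ) (hX : Measurable X)
    (hX2 : Integrable (fun ω => ∑ j, (X ω j) ^ 2) (volume : Measure Ω))
    (μv : Fin p → ℝ) :
    ContinuousOn
      (fun θ : (Fin p → ℝ) × TopologicalSpace.NonemptyCompacts (Fin p → ℝ) =>
        ∫ ω, ((∑ j, θ.1 j * (X ω j - μv j) ^ 2) -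
          sInf ((fun a => ∑ j, θ.1 j * (X ω j - a j) ^ 2) '' (θ.2 : Set (Fin p → ℝ)))))
      {θ | (∀ j, 0 ≤ θ.1 j) ∧ (θ.2 : Set (Fin p → ℝ)).ncard = K} := by
  refine (continuous_iff_continuousAt.2 fun θ₀ => ?_).continuousOn
  change ContinuousAt (fun θ => ∫ ω, riskIntegrand μv θ (X ω)) θ₀
  have hcont := continuous_riskIntegrand μv
  obtain ⟨C, D, hbound⟩ := exists_eventually_abs_riskIntegrand_le μv θ₀
  refine continuousAt_of_dominated (bound := fun ω => C * ∑ j, X ω j ^ 2 + D) ?_ ?_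
    ((hX2.const_mul C).add (integrable_const D)) ?_
  · exact .of_forall fun θ =>
      ((hcont.comp (continuous_const.prodMk continuous_id)).measurable.comp hX).aestronglyMeasurable
  · filter_upwards [hbound] with θ hθ using .of_forall fun ω => hθ (X ω)
  · exact .of_forall fun ω => (hcont.comp (continuous_id.prodMk continuous_const)).continuousAt

/-- Continuity of the sparse K-means clustering risk `(w, A) ↦ R(w, A)` on pairs of a
nonnegative weight vector and a set of `K` points (with the Hausdorff metric on sets). -/
theorem risk_continuous {p K : ℕ} {Ω : Type*} [MeasureSpace Ω]
    [IsProbabilityMeasure (volume : Measure Ω)]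
    (X : Ω → Fin p → ℝ) (hX : Measurable X)
    (hX2 : Integrable (fun ω => ∑ j, (X ω j) ^ 2) (volume : Measure Ω))
    (μv : Fin p → ℝ) (hμv : ∀ j, μv j = ∫ ω, X ω j) :
    ContinuousOn
      (fun θ : (Fin p → ℝ) × TopologicalSpace.NonemptyCompacts (Fin p → ℝ) =>
        ∫ ω, ((∑ j, θ.1 j * (X ω j - μv j) ^ 2) -
          sInf ((fun a => ∑ j, θ.1 j * (X ω j - a j) ^ 2) '' (θ.2 : Set (Fin p → ℝ)))))
      {θ | (∀ j, 0 ≤ θ.1 j) ∧ (θ.2 : Set (Fin p → ℝ)).ncard = K} :=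
  risk_continuous_general X hX hX2 μv
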